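/- Let a : ℝ² → ℝ be C¹ with 0 < A ≤ a ≤ Ā, |∇a| ≤ A₁, and let ε ∈ (0, ε₀) with ε₀ = min{1/2, A²/(2A₁)}. In Cartesian coordinates, for each x ∈ ℝ the equation y·a(x,y) = ε has a unique solution y = y_ε(x) with ε/Ā ≤ y_ε(x) ≤ ε/A, the function y_ε is C¹, and |y_ε'(x)| ≤ C₁·ε where C₁ = 2A₁/A². -/

import Mathlib

/-!
For fixed `x`, the map `Φ(y) = y * a(x, y)` has `Φ' = a + y * a_y ≥ A - (ε / A) * A₁ ≥ A / 2` on
`[0, ε / A]`, because `2 * ε * A₁ ≤ A ^ 2`; so `Φ` is strictly increasing there. Every positive root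
of `Φ = ε` lies in that interval since `y * A ≤ Φ(y)`, and the intermediate value theorem on
`[ε / Abar, ε / A]` provides one. Uniqueness lets the root agree with the local implicit function,
so it is `C¹`, and differentiating `Φ(x, y_ε x) = ε` gives `y_ε' * ∂_y Φ = -y_ε * a_x`, whence
`|y_ε'| ≤ (ε / A) * A₁ / (A / 2)`.
-/

noncomputable def cartPt (x y : ℝ) : EuclideanSpace ℝ (Fin 2) :=
  (WithLp.equiv 2 (Fin 2 → ℝ)).symm ![x, y]

open Filter Topology Set

section ImplicitFunction

variable {𝕜 : Type*} [RCLike 𝕜]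
  {E₁ : Type*} [NormedAddCommGroup E₁] [NormedSpace 𝕜 E₁] [CompleteSpace E₁]
  {E₂ : Type*} [NormedAddCommGroup E₂] [NormedSpace 𝕜 E₂] [CompleteSpace E₂]
  {F : Type*} [NormedAddCommGroup F] [NormedSpace 𝕜 F] [CompleteSpace F]

theorem ContDiffAt.of_eventually_levelSet_subset_graph {f : E₁ × E₂ → F} {g : E₁ → E₂}
    {u : E₁ × E₂} {n : WithTop ℕ∞} (hf : ContDiffAt 𝕜 n f u) (hn : n ≠ 0)
    (hf₂ : (fderiv 𝕜 f u ∘L .inr 𝕜 E₁ E₂).IsInvertible)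
    (hg : ∀ᶠ v in 𝓝 u, f v = f u → g v.1 = v.2) :
    ContDiffAt 𝕜 n g u.1 := by
  set ψ := hf.implicitFunction hn hf₂
  have hψ : Tendsto (fun x ↦ (x, ψ x)) (𝓝 u.1) (𝓝 u) :=
    tendsto_id.prodMk_nhds ((hf.hasStrictFDerivAt hn).tendsto_implicitFunctionOfProdDomain hf₂)
  have hψg : ψ =ᶠ[𝓝 u.1] g := by
    filter_upwards [hf.eventually_apply_implicitFunction hn hf₂, hψ.eventually hg]
      with x hfx hgx
    exact (hgx hfx).symm
  exact (hf.contDiffAt_implicitFunction hn hf₂).congr_of_eventuallyEq hψg.symm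

end ImplicitFunction

theorem ContinuousLinearMap.isInvertible_of_apply_one_ne_zero {𝕜 : Type*} [NormedField 𝕜]
    {f : 𝕜 →L[𝕜] 𝕜} (h : f 1 ≠ 0) : f.IsInvertible :=
  ⟨ContinuousLinearEquiv.unitsEquivAut 𝕜 (Units.mk0 (f 1) h),
    ContinuousLinearMap.ext_ring (by simp)⟩

theorem abs_fderiv_apply_le_norm_gradient_mul {E : Type*} [NormedAddCommGroup E]
    [InnerProductSpace ℝ E] [CompleteSpace E] (f : E → ℝ) (x v : E) :
    |fderiv ℝ f x v| ≤ ‖gradient f x‖ * ‖v‖ := by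
  rw [← inner_gradient_left]
  exact abs_real_inner_le_norm _ _

theorem hasDerivAt_apply_prodMk_right {f : ℝ × ℝ → ℝ} {x y : ℝ}
    (hf : DifferentiableAt ℝ f (x, y)) :
    HasDerivAt (fun t ↦ f (x, t)) (fderiv ℝ f (x, y) (0, 1)) y :=
  hf.hasFDerivAt.comp_hasDerivAt y ((hasDerivAt_const y x).prodMk (hasDerivAt_id y))

theorem fderiv_inl_add_deriv_mul_fderiv_inr_eq_zero {f : ℝ × ℝ → ℝ} {g : ℝ → ℝ} {x c : ℝ}
    (hf : DifferentiableAt ℝ f (x, g x)) (hg : DifferentiableAt ℝ g x)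
    (hc : ∀ᶠ t in 𝓝 x, f (t, g t) = c) :
    fderiv ℝ f (x, g x) (1, 0) + deriv g x * fderiv ℝ f (x, g x) (0, 1) = 0 := by
  have hchain : HasDerivAt (fun t ↦ f (t, g t)) (fderiv ℝ f (x, g x) (1, deriv g x)) x :=
    hf.hasFDerivAt.comp_hasDerivAt x ((hasDerivAt_id x).prodMk hg.hasDerivAt)
  have hconst : HasDerivAt (fun t ↦ f (t, g t)) 0 x :=
    (hasDerivAt_const x c).congr_of_eventuallyEq hc
  have hsplit : ((1 : ℝ), deriv g x) = (1, 0) + deriv g x • (0, 1) := by simp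
  have h := hchain.unique hconst
  rwa [hsplit, map_add, map_smul, smul_eq_mul] at h

noncomputable def cartPtEquiv : (ℝ × ℝ) ≃L[ℝ] EuclideanSpace ℝ (Fin 2) :=
  (ContinuousLinearEquiv.finTwoArrow ℝ ℝ).symm.trans (EuclideanSpace.equiv (Fin 2) ℝ).symm

theorem cartPtEquiv_apply (p : ℝ × ℝ) : cartPtEquiv p = cartPt p.1 p.2 := rfl

theorem norm_cartPt_one_zero : ‖cartPt 1 0‖ = 1 := by
  simp [EuclideanSpace.norm_eq, cartPt]

theorem norm_cartPt_zero_one : ‖cartPt 0 1‖ = 1 := by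
  simp [EuclideanSpace.norm_eq, cartPt]

noncomputable def yMulA (a : EuclideanSpace ℝ (Fin 2) → ℝ) (p : ℝ × ℝ) : ℝ :=
  p.2 * a (cartPt p.1 p.2)

section YMulA

variable {a : EuclideanSpace ℝ (Fin 2) → ℝ}

theorem contDiff_yMulA {n : WithTop ℕ∞} (ha : ContDiff ℝ n a) : ContDiff ℝ n (yMulA a) :=
  contDiff_snd.mul (ha.comp cartPtEquiv.contDiff)

theorem continuous_yMulA (ha : Continuous a) : Continuous (yMulA a) :=
  continuous_snd.mul (ha.comp cartPtEquiv.continuous)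

theorem continuous_yMulA_right (ha : Continuous a) (x : ℝ) : Continuous (fun y ↦ yMulA a (x, y)) :=
  (continuous_yMulA ha).comp (continuous_const.prodMk continuous_id)

theorem differentiable_yMulA (ha : Differentiable ℝ a) : Differentiable ℝ (yMulA a) :=
  differentiable_snd.mul (ha.comp cartPtEquiv.differentiable)

theorem fderiv_yMulA_apply {p : ℝ × ℝ} (ha : DifferentiableAt ℝ a (cartPt p.1 p.2))
    (v : ℝ × ℝ) :
    fderiv ℝ (yMulA a) p v =
      p.2 * fderiv ℝ a (cartPt p.1 p.2) (cartPt v.1 v.2) + a (cartPt p.1 p.2) * v.2 := by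
  have hcomp : HasFDerivAt (fun q : ℝ × ℝ ↦ a (cartPtEquiv q))
      ((fderiv ℝ a (cartPt p.1 p.2)).comp (cartPtEquiv : (ℝ × ℝ) →L[ℝ] _)) p :=
    ha.hasFDerivAt.comp p cartPtEquiv.hasFDerivAt
  have hF : HasFDerivAt (yMulA a) _ p := hasFDerivAt_snd.mul hcomp
  rw [hF.fderiv]
  simp [cartPtEquiv_apply]

theorem le_div_of_yMulA_eq {A ε x y : ℝ} (hA : 0 < A) (haA : ∀ q, A ≤ a q) (hy : 0 ≤ y)
    (h : yMulA a (x, y) = ε) : y ≤ ε / A := by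
  rw [le_div_iff₀ hA, ← h]
  exact mul_le_mul_of_nonneg_left (haA _) hy

theorem exists_yMulA_eq {A Abar ε : ℝ} (ha : Continuous a) (hb : ∀ q, A ≤ a q ∧ a q ≤ Abar)
    (hA : 0 < A) (hε : 0 ≤ ε) (x : ℝ) : ∃ y ∈ Icc (ε / Abar) (ε / A), yMulA a (x, y) = ε := by
  have hAAbar : A ≤ Abar := (hb 0).1.trans (hb 0).2
  have hAbar : 0 < Abar := hA.trans_le hAAbar
  have hlow : yMulA a (x, ε / Abar) ≤ ε := by
    calc ε / Abar * a (cartPt x (ε / Abar)) ≤ ε / Abar * Abar := by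
          gcongr; exact (hb _).2
      _ = ε := div_mul_cancel₀ ε hAbar.ne'
  have hhigh : ε ≤ yMulA a (x, ε / A) := by
    calc ε = ε / A * A := (div_mul_cancel₀ ε hA.ne').symm
      _ ≤ ε / A * a (cartPt x (ε / A)) := by gcongr; exact (hb _).1
  exact intermediate_value_Icc (div_le_div_of_nonneg_left hε hA hAAbar)
    (continuous_yMulA_right ha x).continuousOn ⟨hlow, hhigh⟩

theorem abs_mul_fderiv_le {A₁ : ℝ} (hgr : ∀ q, ‖gradient a q‖ ≤ A₁)
    {q e : EuclideanSpace ℝ (Fin 2)} {y b : ℝ} (hy₀ : 0 ≤ y) (hy : y ≤ b) (he : ‖e‖ = 1) :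
    |y * fderiv ℝ a q e| ≤ b * A₁ := by
  have hD : |fderiv ℝ a q e| ≤ A₁ := by
    simpa [he] using (abs_fderiv_apply_le_norm_gradient_mul a q e).trans
      (mul_le_mul_of_nonneg_right (hgr q) (norm_nonneg e))
  rw [abs_mul, abs_of_nonneg hy₀]
  exact mul_le_mul hy hD (abs_nonneg _) (hy₀.trans hy)

theorem two_mul_mul_le_sq_of_lt_div {A A₁ ε : ℝ} (hε : 0 < ε) (hA₁ : 0 ≤ A₁)
    (h : ε < A ^ 2 / (2 * A₁)) : 2 * ε * A₁ ≤ A ^ 2 := by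
  rcases hA₁.eq_or_lt with rfl | hA₁
  · rw [mul_zero, div_zero] at h
    linarith
  · rw [lt_div_iff₀ (by positivity)] at h
    linarith

theorem div_mul_le_half {A A₁ ε : ℝ} (hA : 0 < A) (hε : 2 * ε * A₁ ≤ A ^ 2) :
    ε / A * A₁ ≤ A / 2 := by
  rw [div_mul_eq_mul_div, div_le_div_iff₀ hA two_pos]
  nlinarith

variable {A A₁ ε : ℝ} (hA : 0 < A) (haA : ∀ q, A ≤ a q) (hgr : ∀ q, ‖gradient a q‖ ≤ A₁)
  (hε : 2 * ε * A₁ ≤ A ^ 2) (ha : Differentiable ℝ a)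
include hA haA hgr hε ha

theorem half_le_fderiv_yMulA_inr {x y : ℝ} (hy₀ : 0 ≤ y) (hy : y ≤ ε / A) :
    A / 2 ≤ fderiv ℝ (yMulA a) (x, y) (0, 1) := by
  have hsmall := abs_mul_fderiv_le hgr (q := cartPt x y) hy₀ hy norm_cartPt_zero_one
  rw [fderiv_yMulA_apply (ha _)]
  linarith [neg_abs_le (y * fderiv ℝ a (cartPt x y) (cartPt 0 1)), haA (cartPt x y),
    div_mul_le_half hA hε]

theorem strictMonoOn_yMulA (x : ℝ) : StrictMonoOn (fun y ↦ yMulA a (x, y)) (Icc 0 (ε / A)) := by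
  refine strictMonoOn_of_deriv_pos (convex_Icc _ _)
    (continuous_yMulA_right ha.continuous x).continuousOn fun y hy ↦ ?_
  rw [interior_Icc] at hy
  rw [(hasDerivAt_apply_prodMk_right (differentiable_yMulA ha _)).deriv]
  linarith [half_le_fderiv_yMulA_inr hA haA hgr hε ha (x := x) hy.1.le hy.2.le]

theorem eq_of_yMulA_eq {x y y' : ℝ} (hy : 0 ≤ y) (hy' : 0 ≤ y') (h : yMulA a (x, y) = ε)
    (h' : yMulA a (x, y') = ε) : y = y' :=
  (strictMonoOn_yMulA hA haA hgr hε ha x).injOn ⟨hy, le_div_of_yMulA_eq hA haA hy h⟩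
    ⟨hy', le_div_of_yMulA_eq hA haA hy' h'⟩ (h.trans h'.symm)

theorem abs_deriv_le_of_yMulA_eq {g : ℝ → ℝ} {x : ℝ} (hg : DifferentiableAt ℝ g x)
    (hgx₀ : 0 ≤ g x) (hgx : g x ≤ ε / A) (hgε : ∀ t, yMulA a (t, g t) = ε) :
    |deriv g x| ≤ 2 * A₁ / A ^ 2 * ε := by
  set D := fderiv ℝ (yMulA a) (x, g x)
  have hchain : D (1, 0) + deriv g x * D (0, 1) = 0 :=
    fderiv_inl_add_deriv_mul_fderiv_inr_eq_zero (differentiable_yMulA ha _) hg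
      (Eventually.of_forall hgε)
  have h₂ : A / 2 ≤ D (0, 1) := half_le_fderiv_yMulA_inr hA haA hgr hε ha hgx₀ hgx
  have h₁ : |D (1, 0)| ≤ ε / A * A₁ := by
    simpa [D, fderiv_yMulA_apply (ha _)] using
      abs_mul_fderiv_le hgr (q := cartPt x (g x)) hgx₀ hgx norm_cartPt_one_zero
  have hA2 : 0 < A / 2 := half_pos hA
  calc |deriv g x| ≤ ε / A * A₁ / (A / 2) := by
        rw [le_div_iff₀ hA2]
        calc |deriv g x| * (A / 2) ≤ |deriv g x| * D (0, 1) := by gcongr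
          _ = |D (1, 0)| := by
            rw [← abs_of_pos (hA2.trans_le h₂), ← abs_mul,
              show deriv g x * D (0, 1) = -D (1, 0) by linarith, abs_neg]
          _ ≤ ε / A * A₁ := h₁
    _ = 2 * A₁ / A ^ 2 * ε := by field_simp

end YMulA

theorem stmt_8 (a : EuclideanSpace ℝ (Fin 2) → ℝ) (A Abar A₁ : ℝ)
    (hA : 0 < A) (ha : ContDiff ℝ 1 a)
    (hb : ∀ p, A ≤ a p ∧ a p ≤ Abar)
    (hgr : ∀ p, ‖gradient a p‖ ≤ A₁)
    (ε : ℝ) (hε : 0 < ε) (hε' : ε < min (1/2) (A ^ 2 / (2 * A₁))) :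
    ∃ yε : ℝ → ℝ, ContDiff ℝ 1 yε ∧ ∀ x : ℝ,
      ε / Abar ≤ yε x ∧ yε x ≤ ε / A ∧
      yε x * a (cartPt x (yε x)) = ε ∧
      (∀ y : ℝ, 0 < y → y * a (cartPt x y) = ε → y = yε x) ∧
      |deriv yε x| ≤ (2 * A₁ / A ^ 2) * ε := by
  have hεA₁ : 2 * ε * A₁ ≤ A ^ 2 := two_mul_mul_le_sq_of_lt_div hε
    ((norm_nonneg _).trans (hgr 0)) (hε'.trans_le (min_le_right _ _))
  have haA : ∀ p, A ≤ a p := fun p ↦ (hb p).1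
  have hdiff : Differentiable ℝ a := ha.differentiable one_ne_zero
  choose yε hyε_mem hyε using exists_yMulA_eq ha.continuous hb hA hε.le
  have hyε_pos : ∀ x, 0 < yε x := fun x ↦
    (div_pos hε (hA.trans_le ((hb 0).1.trans (hb 0).2))).trans_le (hyε_mem x).1
  have hunique : ∀ x y, 0 ≤ y → yMulA a (x, y) = ε → yε x = y := fun x y hy h ↦
    eq_of_yMulA_eq hA haA hgr hεA₁ hdiff (hyε_pos x).le hy (hyε x) h
  have hsmooth : ContDiff ℝ 1 yε := by
    refine contDiff_iff_contDiffAt.2 fun x ↦ ContDiffAt.of_eventually_levelSet_subset_graph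
      (u := (x, yε x)) (contDiff_yMulA ha).contDiffAt one_ne_zero
      (ContinuousLinearMap.isInvertible_of_apply_one_ne_zero ?_) ?_
    · exact (half_pos hA).trans_le
        (half_le_fderiv_yMulA_inr hA haA hgr hεA₁ hdiff (hyε_pos x).le (hyε_mem x).2) |>.ne'
    · filter_upwards [(continuous_snd.tendsto _).eventually (lt_mem_nhds (hyε_pos x))]
        with v hv hvε
      exact hunique v.1 v.2 hv.le (hvε.trans (hyε x))
  exact ⟨yε, hsmooth, fun x ↦ ⟨(hyε_mem x).1, (hyε_mem x).2, hyε x,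
    fun y hy h ↦ (hunique x y hy.le h).symm,
    abs_deriv_le_of_yMulA_eq hA haA hgr hεA₁ hdiff (hsmooth.differentiable one_ne_zero x)
      (hyε_pos x).le (hyε_mem x).2 hyε⟩⟩
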